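/- The squared gradient norm of the entropy E(A) = (1/2)tr(A − log A − Id) with respect to the metric g_A(U,V) = tr(UAV) on positive definite matrices equals (1/4)(tr(A^{-1}) − 2d + tr A): namely the gradient is the unique symmetric U with (AU+UA)/2 = (A E'(A))^{sym} where E'(A) = (1/2)(Id − A^{-1}), giving U = E'(A) and g_A(U,U) = (1/4) tr((Id−A^{-1})A(Id−A^{-1})). -/

import Mathlib

open Matrix

lemma aux_trace_pos_zero {d : ℕ} {A : Matrix (Fin d) (Fin d) ℝ} (hA : A.PosDef)
    (W : Matrix (Fin d) (Fin d) ℝ) (h : (Wᵀ * A * W).trace = 0) : W = 0 := by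
  have key : ∀ j, (Wᵀ * A * W) j j = (fun i => W i j) ⬝ᵥ A *ᵥ (fun i => W i j) := by
    intro j
    simp only [Matrix.mul_apply, Matrix.transpose_apply, dotProduct, Matrix.mulVec,
      Finset.sum_mul, Finset.mul_sum, dotProduct]
    rw [Finset.sum_comm]
    congr 1; ext i; congr 1; ext k; ring
  have hnn : ∀ j ∈ Finset.univ, (0:ℝ) ≤ (Wᵀ * A * W) j j := by
    intro j _
    rw [key j]
    have := hA.posSemidef.dotProduct_mulVec_nonneg (fun i => W i j)
    simpa using this
  have hz : ∀ j ∈ Finset.univ, (Wᵀ * A * W) j j = 0 :=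
    (Finset.sum_eq_zero_iff_of_nonneg hnn).mp h
  have hcolzero : ∀ j, (fun i => W i j) = 0 := by
    intro j
    by_contra hc
    have hpos : 0 < (Wᵀ * A * W) j j := by
      rw [key j]; simpa using hA.dotProduct_mulVec_pos hc
    linarith [hz j (Finset.mem_univ j), hpos]
  ext i j
  simpa using congr_fun (hcolzero j) i

theorem fisher_rao_gradient_norm {d : ℕ} (A : Matrix (Fin d) (Fin d) ℝ) (hA : A.PosDef) :
    letI U : Matrix (Fin d) (Fin d) ℝ := (1/2 : ℝ) • (1 - A⁻¹)
    Uᵀ = U ∧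
    (1/2 : ℝ) • (A * U + U * A) = (1/2 : ℝ) • (A - 1) ∧
    (∀ V : Matrix (Fin d) (Fin d) ℝ, Vᵀ = V →
      (1/2 : ℝ) • (A * V + V * A) = (1/2 : ℝ) • (A - 1) → V = U) ∧
    (U * A * U).trace = (1/4 : ℝ) * ((1 - A⁻¹) * A * (1 - A⁻¹)).trace ∧
    (U * A * U).trace = (1/4 : ℝ) * ((A⁻¹).trace - 2 * d + A.trace) := by
  set U : Matrix (Fin d) (Fin d) ℝ := (1/2 : ℝ) • (1 - A⁻¹) with hU
  have hdet : IsUnit A.det := isUnit_iff_ne_zero.mpr hA.det_pos.ne'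
  have hAinv : A * A⁻¹ = 1 := Matrix.mul_nonsing_inv A hdet
  have hinvA : A⁻¹ * A = 1 := Matrix.nonsing_inv_mul A hdet
  have hAsymm : Aᵀ = A := hA.1
  have hUsymm : Uᵀ = U := by
    show ((1/2 : ℝ) • (1 - A⁻¹))ᵀ = (1/2 : ℝ) • (1 - A⁻¹)
    rw [transpose_smul, transpose_sub, transpose_one, Matrix.transpose_nonsing_inv, hAsymm]
  have h1 : A * (1 - A⁻¹) = A - 1 := by rw [Matrix.mul_sub, mul_one, hAinv]
  have h2 : (1 - A⁻¹) * A = A - 1 := by rw [Matrix.sub_mul, one_mul, hinvA]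
  have hgrad : (1/2 : ℝ) • (A * U + U * A) = (1/2 : ℝ) • (A - 1) := by
    rw [hU, Matrix.mul_smul, Matrix.smul_mul, h1, h2]
    module
  refine ⟨hUsymm, hgrad, ?_, ?_, ?_⟩
  · intro V hVsymm hVgrad
    have hW : A * (V - U) + (V - U) * A = 0 := by
      have h2 : (1/2 : ℝ) • (A * V + V * A) = (1/2 : ℝ) • (A * U + U * A) := by
        rw [hVgrad, hgrad]
      have h3 : A * V + V * A = A * U + U * A := by
        have := smul_right_injective (Matrix (Fin d) (Fin d) ℝ)
          (by norm_num : (1/2 : ℝ) ≠ 0) h2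
        exact this
      rw [Matrix.mul_sub, Matrix.sub_mul]
      rw [show A * V - A * U + (V * A - U * A) = (A * V + V * A) - (A * U + U * A) by abel, h3]
      abel
    set W := V - U with hWdef
    have hWsymm : Wᵀ = W := by rw [hWdef, transpose_sub, hVsymm, hUsymm]
    have htr : (Wᵀ * A * W).trace = 0 := by
      rw [hWsymm]
      have hAW : A * W = -(W * A) := by
        have := hW
        linear_combination (norm := module) this
      have h1 : (W * A * W).trace = (A * W * W).trace := by
        rw [Matrix.mul_assoc, Matrix.trace_mul_comm, Matrix.mul_assoc]
      have h2 : (A * W * W).trace = -((W * A * W).trace) := by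
        rw [hAW]
        simp [Matrix.neg_mul, Matrix.trace_neg]
      linarith [h1, h2]
    have : W = 0 := aux_trace_pos_zero hA W htr
    have : V - U = 0 := this
    linear_combination (norm := module) this
  · show (((1/2 : ℝ) • (1 - A⁻¹)) * A * ((1/2 : ℝ) • (1 - A⁻¹))).trace
        = (1/4 : ℝ) * ((1 - A⁻¹) * A * (1 - A⁻¹)).trace
    rw [Matrix.smul_mul, Matrix.smul_mul, Matrix.mul_smul, smul_smul, Matrix.trace_smul]
    norm_num
  · show (((1/2 : ℝ) • (1 - A⁻¹)) * A * ((1/2 : ℝ) • (1 - A⁻¹))).trace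
        = (1/4 : ℝ) * ((A⁻¹).trace - 2 * d + A.trace)
    rw [Matrix.smul_mul, Matrix.smul_mul, Matrix.mul_smul, smul_smul, Matrix.trace_smul]
    have hexp : (1 - A⁻¹) * A * (1 - A⁻¹) = A - 1 - 1 + A⁻¹ := by
      rw [Matrix.sub_mul, one_mul, hinvA, Matrix.mul_sub, mul_one, Matrix.sub_mul, hAinv,
        one_mul]
      abel
    rw [hexp]
    simp only [Matrix.trace_add, Matrix.trace_sub, Matrix.trace_one]
    simp only [smul_eq_mul, Finset.card_univ, Fintype.card_fin]
    ring
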